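/- arXiv:2402.05936 — 4 statements merged into one kernel-verified Lean document; each statement's English description precedes it below -/
import Mathlib

section
/- If F and G are distribution functions on [0,∞) that are both positively decreasing (i.e., for every v>1, limsup_{x→∞} F̄(vx)/F̄(x) < 1), and X, Y are nonnegative random variables with distributions F, G such that P[max(X,Y) > x] ~ F̄(x) + Ḡ(x) as x→∞, then the distribution of max(X,Y) is positively decreasing. -/
open Filter MeasureTheory

/-- Tail of (the distribution of) a random variable `X`. -/
noncomputable def rtail {Ω : Type*} [MeasurableSpace Ω] (μ : Measure Ω) (X : Ω → ℝ) (x : ℝ) : ℝ :=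
  (μ {ω | x < X ω}).toReal

/-- The positively decreasing class `𝒫𝒟`. -/
def PosDec (T : ℝ → ℝ) : Prop :=
  ∀ v : ℝ, 1 < v → limsup (fun x => T (v * x) / T x) atTop < 1

/-- The generalized long-tailed class `𝒪ℒ`. -/
def GenLong (T : ℝ → ℝ) : Prop :=
  ∀ t : ℝ, t ≠ 0 → IsBoundedUnder (· ≤ ·) atTop (fun x => T (x - t) / T x)

/-- The long-tailed class `ℒ`. -/
def LongTailed (T : ℝ → ℝ) : Prop :=
  ∀ t : ℝ, Tendsto (fun x => T (x - t) / T x) atTop (nhds 1)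

/-- The dominatedly varying class `𝒟`. -/
def DomVar (T : ℝ → ℝ) : Prop :=
  ∀ b : ℝ, 0 < b → b < 1 → IsBoundedUnder (· ≤ ·) atTop (fun x => T (b * x) / T x)

/-- Strong asymptotic independence with constant `C`:
`P[X > x, Y > y] ~ C ⋅ F̄(x) ⋅ Ḡ(y)` as `(x, y) → (∞, ∞)`. -/
def SAI {Ω : Type*} [MeasurableSpace Ω] (μ : Measure Ω) (X Y : Ω → ℝ) (C : ℝ) : Prop :=
  Tendsto
    (fun p : ℝ × ℝ =>
      (μ {ω | p.1 < X ω ∧ p.2 < Y ω}).toReal / (rtail μ X p.1 * rtail μ Y p.2))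
    (atTop ×ˢ atTop) (nhds C)

section aux

lemma rtail_nonneg {Ω : Type*} [MeasurableSpace Ω] (μ : Measure Ω) (X : Ω → ℝ) (x : ℝ) :
    0 ≤ rtail μ X x := ENNReal.toReal_nonneg

lemma rtail_anti {Ω : Type*} [MeasurableSpace Ω] (μ : Measure Ω) [IsProbabilityMeasure μ]
    (X : Ω → ℝ) {x y : ℝ} (h : x ≤ y) : rtail μ X y ≤ rtail μ X x := by
  apply ENNReal.toReal_mono (measure_ne_top μ _)
  exact measure_mono fun ω hω => lt_of_le_of_lt h hω

lemma rtail_max_le {Ω : Type*} [MeasurableSpace Ω] (μ : Measure Ω) [IsProbabilityMeasure μ]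
    (X Y : Ω → ℝ) (x : ℝ) :
    rtail μ (fun ω => max (X ω) (Y ω)) x ≤ rtail μ X x + rtail μ Y x := by
  unfold rtail
  rw [← ENNReal.toReal_add (measure_ne_top μ _) (measure_ne_top μ _)]
  apply ENNReal.toReal_mono (by simp [measure_ne_top])
  have h : {ω | x < max (X ω) (Y ω)} = {ω | x < X ω} ∪ {ω | x < Y ω} := by
    ext ω; simp [lt_max_iff]
  rw [h]
  exact measure_union_le _ _

lemma mediant_le_max {a b c d : ℝ} (ha : 0 ≤ a) (hc : 0 ≤ c) (hb : 0 ≤ b) (hd : 0 ≤ d)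
    (hab : a ≤ b) (hcd : c ≤ d) :
    (a + c) / (b + d) ≤ max (a / b) (c / d) := by
  rcases hb.eq_or_lt with hb0 | hb0
  · have ha0 : a = 0 := le_antisymm (hab.trans hb0.ge) ha
    simp only [← hb0, ha0, zero_add]
    exact le_max_right _ _
  rcases hd.eq_or_lt with hd0 | hd0
  · have hc0 : c = 0 := le_antisymm (hcd.trans hd0.ge) hc
    simp only [← hd0, hc0, add_zero]
    exact le_max_left _ _
  set m := max (a / b) (c / d) with hm
  have h1 : a ≤ m * b := by
    rw [← div_le_iff₀ hb0]; exact le_max_left _ _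
  have h2 : c ≤ m * d := by
    rw [← div_le_iff₀ hd0]; exact le_max_right _ _
  rw [div_le_iff₀ (by linarith)]
  linarith

end aux

theorem stmt0 {Ω : Type*} [MeasurableSpace Ω] (μ : Measure Ω) [IsProbabilityMeasure μ]
    (X Y : Ω → ℝ) (hX : ∀ ω, 0 ≤ X ω) (hY : ∀ ω, 0 ≤ Y ω)
    (hF : PosDec (rtail μ X)) (hG : PosDec (rtail μ Y))
    (hmax : Tendsto
      (fun x => rtail μ (fun ω => max (X ω) (Y ω)) x / (rtail μ X x + rtail μ Y x))
      atTop (nhds 1)) :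
    PosDec (rtail μ (fun ω => max (X ω) (Y ω))) := by
  intro v hv
  have hv0 : (0:ℝ) < v := lt_trans one_pos hv
  set H := rtail μ (fun ω => max (X ω) (Y ω)) with hHdef
  set F := rtail μ X with hFdef
  set G := rtail μ Y with hGdef
  set S : ℝ → ℝ := fun x => F x + G x with hSdef
  -- boundedness of the F and G ratios
  have hFb : IsBoundedUnder (· ≤ ·) atTop (fun x => F (v * x) / F x) := by
    refine ⟨1, eventually_map.2 ?_⟩
    filter_upwards [eventually_ge_atTop (0:ℝ)] with x h0
    have hx : x ≤ v * x := le_mul_of_one_le_left h0 hv.le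
    have h1 : F (v * x) ≤ F x := rtail_anti μ X hx
    rcases (rtail_nonneg μ X x).eq_or_lt with h | h
    · have : F (v * x) = 0 := le_antisymm (h1.trans h.ge) (rtail_nonneg μ X _)
      simp [this]
    · exact div_le_one_of_le₀ h1 h.le
  have hGb : IsBoundedUnder (· ≤ ·) atTop (fun x => G (v * x) / G x) := by
    refine ⟨1, eventually_map.2 ?_⟩
    filter_upwards [eventually_ge_atTop (0:ℝ)] with x h0
    have hx : x ≤ v * x := le_mul_of_one_le_left h0 hv.le
    have h1 : G (v * x) ≤ G x := rtail_anti μ Y hx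
    rcases (rtail_nonneg μ Y x).eq_or_lt with h | h
    · have : G (v * x) = 0 := le_antisymm (h1.trans h.ge) (rtail_nonneg μ Y _)
      simp [this]
    · exact div_le_one_of_le₀ h1 h.le
  set L : ℝ := max (limsup (fun x => F (v * x) / F x) atTop)
      (limsup (fun x => G (v * x) / G x) atTop) with hLdef
  have hL1 : L < 1 := max_lt (hF v hv) (hG v hv)
  set c0 : ℝ := (L + 1) / 2 with hc0def
  have hLc0 : L < c0 := by rw [hc0def]; linarith
  have hc01 : c0 < 1 := by rw [hc0def]; linarith
  have hFe : ∀ᶠ x in atTop, F (v * x) / F x < c0 :=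
    eventually_lt_of_limsup_lt (lt_of_le_of_lt (le_max_left _ _) hLc0) hFb
  have hGe : ∀ᶠ x in atTop, G (v * x) / G x < c0 :=
    eventually_lt_of_limsup_lt (lt_of_le_of_lt (le_max_right _ _) hLc0) hGb
  have hBe : ∀ᶠ x in atTop, S (v * x) / S x ≤ c0 := by
    filter_upwards [hFe, hGe, eventually_ge_atTop (0:ℝ)] with x h1 h2 h0
    have hx : x ≤ v * x := le_mul_of_one_le_left h0 hv.le
    calc S (v * x) / S x
        ≤ max (F (v * x) / F x) (G (v * x) / G x) :=
          mediant_le_max (rtail_nonneg μ X _) (rtail_nonneg μ Y _)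
            (rtail_nonneg μ X _) (rtail_nonneg μ Y _)
            (rtail_anti μ X hx) (rtail_anti μ Y hx)
      _ ≤ c0 := max_le h1.le h2.le
  -- the two tendsto factors
  have hA : Tendsto (fun x => H (v * x) / S (v * x)) atTop (nhds 1) :=
    hmax.comp (Tendsto.const_mul_atTop hv0 tendsto_id)
  have hC : Tendsto (fun x => S x / H x) atTop (nhds 1) := by
    have h := hmax.inv₀ one_ne_zero
    simp only [inv_div, inv_one] at h
    exact h
  have hAC : Tendsto (fun x => H (v * x) / S (v * x) * (S x / H x) * c0) atTop (nhds c0) := by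
    have := (hA.mul hC).mul_const c0
    simpa using this
  set c1 : ℝ := (c0 + 1) / 2 with hc1def
  have hc0c1 : c0 < c1 := by rw [hc1def]; linarith
  have hc11 : c1 < 1 := by rw [hc1def]; linarith
  have hACe : ∀ᶠ x in atTop, H (v * x) / S (v * x) * (S x / H x) * c0 < c1 :=
    hAC.eventually_lt_const hc0c1
  have key : ∀ᶠ x in atTop, H (v * x) / H x ≤ c1 := by
    filter_upwards [hBe, hACe, eventually_ge_atTop (0:ℝ)] with x hB hACx h0
    have hx : x ≤ v * x := le_mul_of_one_le_left h0 hv.le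
    have hHS : H x ≤ S x := rtail_max_le μ X Y x
    have hHSv : H (v * x) ≤ S (v * x) := rtail_max_le μ X Y (v * x)
    have hHanti : H (v * x) ≤ H x := rtail_anti μ _ hx
    have hHn : 0 ≤ H x := rtail_nonneg μ _ x
    have hHvn : 0 ≤ H (v * x) := rtail_nonneg μ _ _
    have hSn : 0 ≤ S x := add_nonneg (rtail_nonneg μ X x) (rtail_nonneg μ Y x)
    have hSvn : 0 ≤ S (v * x) := add_nonneg (rtail_nonneg μ X _) (rtail_nonneg μ Y _)
    have step : H (v * x) / H x ≤ H (v * x) / S (v * x) * (S (v * x) / S x) * (S x / H x) := by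
      rcases hHn.eq_or_lt with hHx | hHx
      · have hHv0 : H (v * x) = 0 := le_antisymm (hHanti.trans hHx.ge) hHvn
        simp only [hHv0, zero_div]
        positivity
      rcases hSvn.eq_or_lt with hSv | hSv
      · have hHv0 : H (v * x) = 0 := le_antisymm (hHSv.trans hSv.ge) hHvn
        simp only [hHv0, zero_div]
        positivity
      have hSx : 0 < S x := lt_of_lt_of_le hHx hHS
      have heq : H (v * x) / S (v * x) * (S (v * x) / S x) * (S x / H x)
          = H (v * x) / H x := by
        field_simp
      rw [heq]
    have step2 : H (v * x) / S (v * x) * (S (v * x) / S x) * (S x / H x)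
        ≤ H (v * x) / S (v * x) * (S x / H x) * c0 := by
      have hACn : 0 ≤ H (v * x) / S (v * x) * (S x / H x) :=
        mul_nonneg (div_nonneg hHvn hSvn) (div_nonneg hSn hHn)
      calc H (v * x) / S (v * x) * (S (v * x) / S x) * (S x / H x)
          = H (v * x) / S (v * x) * (S x / H x) * (S (v * x) / S x) := by ring
        _ ≤ H (v * x) / S (v * x) * (S x / H x) * c0 :=
            mul_le_mul_of_nonneg_left hB hACn
    linarith
  have hcob : IsCoboundedUnder (· ≤ ·) atTop (fun x => H (v * x) / H x) := by
    apply isCoboundedUnder_le_of_le atTop (x := 0)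
    intro x
    exact div_nonneg (rtail_nonneg μ _ _) (rtail_nonneg μ _ _)
  exact lt_of_le_of_lt (limsup_le_of_le hcob key) hc11
end

section
/- Let X and Y be nonnegative strongly asymptotically independent random variables (P[X > x, Y > y] ~ C F̄(x)Ḡ(y) as x,y→∞, C > 0) whose distributions F and G are both generalized long-tailed. Then the distribution of min(X,Y) is generalized long-tailed. -/
open Filter MeasureTheory

open Topology

/-! On the diagonal, strong asymptotic independence says that the tail of `min X Y`,
`P[X > x, Y > x]`, is asymptotic to `C F̄(x) Ḡ(x)`. The product of two `𝒪ℒ` tails is in `𝒪ℒ`,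
and `𝒪ℒ` is invariant under asymptotic equivalence up to a positive constant. -/

theorem GenLong.mul {F G : ℝ → ℝ} (hF : GenLong F) (hG : GenLong G)
    (hF₀ : ∀ x, 0 ≤ F x) (hG₀ : ∀ x, 0 ≤ G x) : GenLong (F * G) := by
  intro t ht
  have hsplit : (fun x => (F * G) (x - t) / (F * G) x) =
      (fun x => F (x - t) / F x) * fun x => G (x - t) / G x := by
    funext x
    exact mul_div_mul_comm _ _ _ _
  rw [hsplit]
  exact isBoundedUnder_le_mul_of_nonneg (Frequently.of_forall fun _ => div_nonneg (hF₀ _) (hF₀ _))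
    (hF t ht) (Eventually.of_forall fun _ => div_nonneg (hG₀ _) (hG₀ _)) (hG t ht)

/- The junk value `a / 0 = 0` is harmless here: a limit `c ≠ 0` keeps `T` and `S` eventually
nonzero. -/
theorem GenLong.of_tendsto_div {S T : ℝ → ℝ} {c : ℝ} (hS : GenLong S) (hc : 0 < c)
    (hTS : Tendsto (fun x => T x / S x) atTop (𝓝 c)) : GenLong T := by
  intro t ht
  have hTS_shift : Tendsto (fun x => T (x - t) / S (x - t)) atTop (𝓝 c) :=
    hTS.comp (tendsto_atTop_add_const_right _ (-t) tendsto_id)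
  have hquot : Tendsto (fun x => (T (x - t) / S (x - t)) / (T x / S x)) atTop (𝓝 1) := by
    rw [← div_self hc.ne']
    exact hTS_shift.div hTS hc.ne'
  obtain ⟨K, hK⟩ := (hS t ht).eventually_le
  refine isBoundedUnder_of_eventually_le (a := 2 * max K 0) ?_
  filter_upwards [hK, hquot.eventually (Ioo_mem_nhds zero_lt_one one_lt_two),
    hTS.eventually_ne hc.ne', hTS_shift.eventually_ne hc.ne'] with x hSx ⟨hq₀, hq₂⟩ hx hxt
  obtain ⟨hTx, hSx₀⟩ := div_ne_zero_iff.mp hx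
  have hSxt : S (x - t) ≠ 0 := (div_ne_zero_iff.mp hxt).2
  calc T (x - t) / T x
      = (T (x - t) / S (x - t)) / (T x / S x) * (S (x - t) / S x) := by field_simp
    _ ≤ (T (x - t) / S (x - t)) / (T x / S x) * max K 0 :=
      mul_le_mul_of_nonneg_left (hSx.trans (le_max_left _ _)) hq₀.le
    _ ≤ 2 * max K 0 := mul_le_mul_of_nonneg_right hq₂.le (le_max_right _ _)

theorem rtail_min {Ω : Type*} [MeasurableSpace Ω] (μ : Measure Ω) (X Y : Ω → ℝ) (x : ℝ) :
    rtail μ (fun ω => min (X ω) (Y ω)) x = (μ {ω | x < X ω ∧ x < Y ω}).toReal := by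
  simp only [rtail, lt_min_iff]

theorem SAI.tendsto_rtail_min_div {Ω : Type*} [MeasurableSpace Ω] {μ : Measure Ω} {X Y : Ω → ℝ}
    {C : ℝ} (h : SAI μ X Y C) :
    Tendsto (fun x => rtail μ (fun ω => min (X ω) (Y ω)) x / (rtail μ X * rtail μ Y) x)
      atTop (𝓝 C) := by
  refine (h.comp (tendsto_id.prodMk tendsto_id)).congr fun x => ?_
  simp only [Function.comp_apply, id, Pi.mul_apply, rtail_min]

theorem stmt4_general {Ω : Type*} [MeasurableSpace Ω] (μ : Measure Ω)
    (X Y : Ω → ℝ)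
    (C : ℝ) (hC : 0 < C) (hSAI : SAI μ X Y C)
    (hF : GenLong (rtail μ X)) (hG : GenLong (rtail μ Y)) :
    GenLong (rtail μ (fun ω => min (X ω) (Y ω))) :=
  (hF.mul hG (fun _ => ENNReal.toReal_nonneg) fun _ => ENNReal.toReal_nonneg).of_tendsto_div hC
    hSAI.tendsto_rtail_min_div

theorem stmt4 {Ω : Type*} [MeasurableSpace Ω] (μ : Measure Ω) [IsProbabilityMeasure μ]
    (X Y : Ω → ℝ) (hX : ∀ ω, 0 ≤ X ω) (hY : ∀ ω, 0 ≤ Y ω)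
    (C : ℝ) (hC : 0 < C) (hSAI : SAI μ X Y C)
    (hF : GenLong (rtail μ X)) (hG : GenLong (rtail μ Y)) :
    GenLong (rtail μ (fun ω => min (X ω) (Y ω))) :=
  stmt4_general μ X Y C hC hSAI hF hG
end

section
/- Let X and Y be nonnegative strongly asymptotically independent random variables whose distributions F and G are both long-tailed. Then the distribution of min(X,Y) is long-tailed. -/
open Filter MeasureTheory

theorem stmt5 {Ω : Type*} [MeasurableSpace Ω] (μ : Measure Ω) [IsProbabilityMeasure μ]
    (X Y : Ω → ℝ) (hX : ∀ ω, 0 ≤ X ω) (hY : ∀ ω, 0 ≤ Y ω)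
    (C : ℝ) (hC : 0 < C) (hSAI : SAI μ X Y C)
    (hF : LongTailed (rtail μ X)) (hG : LongTailed (rtail μ Y)) :
    LongTailed (rtail μ (fun ω => min (X ω) (Y ω))) := by
  have hmono : ∀ (Z : Ω → ℝ), Antitone (rtail μ Z) := by
    intro Z x y hxy
    exact ENNReal.toReal_mono (measure_ne_top μ _)
      (measure_mono (fun ω hω => lt_of_le_of_lt hxy hω))
  have hnn : ∀ (Z : Ω → ℝ) (x : ℝ), 0 ≤ rtail μ Z x := fun Z x => ENNReal.toReal_nonneg
  have hposgen : ∀ (Z : Ω → ℝ), LongTailed (rtail μ Z) → ∀ x, 0 < rtail μ Z x := by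
    intro Z hZ x
    rcases (hnn Z x).lt_or_eq with h | h
    · exact h
    · exfalso
      have h1 := hZ 0
      simp only [sub_zero] at h1
      have h2 : (fun y => rtail μ Z y / rtail μ Z y) =ᶠ[atTop] (fun _ => (0 : ℝ)) := by
        filter_upwards [eventually_ge_atTop x] with y hy
        have hz : rtail μ Z y = 0 := le_antisymm (h ▸ hmono Z hy) (hnn Z y)
        simp [hz]
      have h3 : Tendsto (fun _ : ℝ => (0 : ℝ)) atTop (nhds 1) := h1.congr' h2
      have := tendsto_nhds_unique h3 tendsto_const_nhds
      norm_num at this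
  have hFpos := hposgen X hF
  have hGpos := hposgen Y hG
  set D : ℝ → ℝ := rtail μ (fun ω => min (X ω) (Y ω)) with hDdef
  have hD : ∀ x, D x = (μ {ω | x < X ω ∧ x < Y ω}).toReal := by
    intro x
    simp only [hDdef, rtail, lt_min_iff]
  set a : ℝ → ℝ := fun x => D x / (rtail μ X x * rtail μ Y x) with hadef
  have hdiag : Tendsto (fun x : ℝ => (x, x)) atTop (atTop ×ˢ atTop) :=
    tendsto_id.prodMk tendsto_id
  have ha : Tendsto a atTop (nhds C) := by
    have := hSAI.comp hdiag
    refine this.congr (fun x => ?_)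
    simp only [Function.comp, hadef, hD]
  have hDpos : ∀ᶠ x in atTop, 0 < D x := by
    have hev : ∀ᶠ x in atTop, C / 2 < a x :=
      ha.eventually (eventually_gt_nhds (half_lt_self hC))
    filter_upwards [hev] with x hx
    rcases (hnn (fun ω => min (X ω) (Y ω)) x).lt_or_eq with h | h
    · exact h
    · exfalso
      have hD0 : D x = 0 := h.symm
      have : a x = 0 := by simp [hadef, hD0]
      rw [this] at hx
      linarith
  intro t
  have hst : Tendsto (fun x : ℝ => x - t) atTop atTop :=
    tendsto_atTop_add_const_right atTop (-t) tendsto_id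
  have ha' : Tendsto (fun x => a (x - t)) atTop (nhds C) := ha.comp hst
  have h1 : Tendsto (fun x => a (x - t) / a x) atTop (nhds 1) := by
    have := ha'.div ha hC.ne'
    rwa [div_self hC.ne'] at this
  have key : Tendsto (fun x => (a (x - t) / a x) * (rtail μ X (x - t) / rtail μ X x) *
      (rtail μ Y (x - t) / rtail μ Y x)) atTop (nhds 1) := by
    have := (h1.mul (hF t)).mul (hG t)
    simpa using this
  refine key.congr' ?_
  filter_upwards [hDpos] with x hx
  have hFx := (hFpos x).ne'
  have hGx := (hGpos x).ne'
  have hFx' := (hFpos (x - t)).ne'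
  have hGx' := (hGpos (x - t)).ne'
  have hDx := hx.ne'
  simp only [hadef]
  field_simp
end

section
/- Let X₁ and X₂ be strongly asymptotically independent random variables with distributions F₁, F₂ ∈ 𝒟 ∩ 𝒫𝒟. Then the distribution of min(X₁, X₂) belongs to 𝒟 ∩ 𝒫𝒟. -/
open Filter MeasureTheory

theorem stmt17 {Ω : Type*} [MeasurableSpace Ω] (μ : Measure Ω) [IsProbabilityMeasure μ]
    (X₁ X₂ : Ω → ℝ) (C : ℝ) (hC : 0 < C) (hSAI : SAI μ X₁ X₂ C)
    (hF₁D : DomVar (rtail μ X₁)) (hF₁PD : PosDec (rtail μ X₁))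
    (hF₂D : DomVar (rtail μ X₂)) (hF₂PD : PosDec (rtail μ X₂)) :
    DomVar (rtail μ (fun ω => min (X₁ ω) (X₂ ω))) ∧
    PosDec (rtail μ (fun ω => min (X₁ ω) (X₂ ω))) := by

  classical
  set T : ℝ → ℝ := rtail μ (fun ω => min (X₁ ω) (X₂ ω)) with hTdef
  set T₁ : ℝ → ℝ := rtail μ X₁ with hT₁def
  set T₂ : ℝ → ℝ := rtail μ X₂ with hT₂def
  have hanti : ∀ (Y : Ω → ℝ), Antitone (rtail μ Y) := by
    intro Y x y hxy
    exact ENNReal.toReal_mono (measure_ne_top μ _)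
      (measure_mono (fun ω hω => lt_of_le_of_lt hxy hω))
  have hnn : ∀ (Y : Ω → ℝ) (x : ℝ), 0 ≤ rtail μ Y x := fun Y x => ENNReal.toReal_nonneg
  set g : ℝ → ℝ := fun x => (μ {ω | x < X₁ ω ∧ x < X₂ ω}).toReal / (T₁ x * T₂ x) with hgdef
  have hgC : Tendsto g atTop (nhds C) := by
    have hdiag : Tendsto (fun x : ℝ => (x, x)) atTop (atTop ×ˢ atTop) :=
      tendsto_id.prodMk tendsto_id
    have h := hSAI.comp hdiag
    rw [hgdef, hT₁def, hT₂def]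
    simpa only [Function.comp_def] using h
  have hgnn : ∀ x, 0 ≤ g x := fun x =>
    div_nonneg ENNReal.toReal_nonneg (mul_nonneg (hnn X₁ x) (hnn X₂ x))
  have hTg : ∀ x, T x = (μ {ω | x < X₁ ω ∧ x < X₂ ω}).toReal := by
    intro x
    have : {ω | x < min (X₁ ω) (X₂ ω)} = {ω | x < X₁ ω ∧ x < X₂ ω} := by
      ext ω; simp [lt_min_iff]
    simp [hTdef, rtail, this]
  have hpos : ∀ᶠ x in atTop, 0 < T₁ x ∧ 0 < T₂ x ∧ 0 < T x ∧ T x = g x * (T₁ x * T₂ x) := by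
    filter_upwards [hgC.eventually (eventually_gt_nhds (half_lt_self hC))] with x hx
    have hd : T₁ x * T₂ x ≠ 0 := by
      intro h
      have : g x = 0 := by rw [hgdef]; simp [h]
      linarith
    have h1 : 0 < T₁ x := lt_of_le_of_ne (hnn X₁ x) (fun h => hd (by rw [← h, zero_mul]))
    have h2 : 0 < T₂ x := lt_of_le_of_ne (hnn X₂ x)
      (fun h => hd (by rw [← h, mul_zero]))
    have hTeq : T x = g x * (T₁ x * T₂ x) := by
      rw [hTg x, hgdef]
      field_simp
    have h3 : 0 < T x := by
      rw [hTeq]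
      have : 0 < g x := lt_of_lt_of_le (half_pos hC) hx.le
      positivity
    exact ⟨h1, h2, h3, hTeq⟩
  have key : ∀ c : ℝ, 0 < c →
      Tendsto (fun x => g (c * x) / g x) atTop (nhds 1) ∧
      ∀ᶠ x in atTop, T (c * x) / T x
        = (g (c * x) / g x) * (T₁ (c * x) / T₁ x) * (T₂ (c * x) / T₂ x) := by
    intro c hc
    have hcx : Tendsto (fun x : ℝ => c * x) atTop atTop :=
      Tendsto.const_mul_atTop hc tendsto_id
    constructor
    · have := (hgC.comp hcx).div hgC hC.ne'
      rwa [div_self hC.ne'] at this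
    · filter_upwards [hpos, hcx.eventually hpos] with x hx hx'
      obtain ⟨h1, h2, h3, h4⟩ := hx
      obtain ⟨h1', h2', h3', h4'⟩ := hx'
      have hgx : g x ≠ 0 := by
        intro h
        rw [h, zero_mul] at h4
        linarith
      rw [h4, h4']
      field_simp
  constructor
  · -- DomVar
    intro b hb0 hb1
    obtain ⟨he, hfac⟩ := key b hb0
    obtain ⟨M₁, hM₁⟩ := hF₁D b hb0 hb1
    obtain ⟨M₂, hM₂⟩ := hF₂D b hb0 hb1
    rw [eventually_map] at hM₁ hM₂
    refine ⟨2 * max M₁ 0 * max M₂ 0, ?_⟩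
    rw [eventually_map]
    filter_upwards [hfac, hM₁, hM₂, he.eventually (eventually_le_nhds one_lt_two)]
      with x hfx h1 h2 he2
    rw [hfx]
    have hr1 : T₁ (b * x) / T₁ x ≤ max M₁ 0 := le_trans h1 (le_max_left _ _)
    have hr2 : T₂ (b * x) / T₂ x ≤ max M₂ 0 := le_trans h2 (le_max_left _ _)
    have hn0 : (0:ℝ) ≤ g (b * x) / g x := div_nonneg (hgnn _) (hgnn _)
    have hn1 : (0:ℝ) ≤ T₁ (b * x) / T₁ x := div_nonneg (hnn X₁ _) (hnn X₁ _)
    have hn2 : (0:ℝ) ≤ T₂ (b * x) / T₂ x := div_nonneg (hnn X₂ _) (hnn X₂ _)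
    have step1 : g (b * x) / g x * (T₁ (b * x) / T₁ x) ≤ 2 * max M₁ 0 :=
      mul_le_mul he2 hr1 hn1 (by norm_num)
    exact mul_le_mul step1 hr2 hn2 (by positivity)
  · -- PosDec
    intro v hv
    obtain ⟨he, hfac⟩ := key v (lt_trans one_pos hv)
    have hb₁ : ∀ᶠ x in atTop, T₁ (v * x) / T₁ x ≤ 1 := by
      filter_upwards [hpos, eventually_ge_atTop (0:ℝ)] with x hx hx0
      exact (div_le_one hx.1).mpr (hanti X₁ (le_mul_of_one_le_left hx0 hv.le))
    have hb₂ : ∀ᶠ x in atTop, T₂ (v * x) / T₂ x ≤ 1 := by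
      filter_upwards [hpos, eventually_ge_atTop (0:ℝ)] with x hx hx0
      exact (div_le_one hx.2.1).mpr (hanti X₂ (le_mul_of_one_le_left hx0 hv.le))
    set L₁ : ℝ := limsup (fun x => T₁ (v * x) / T₁ x) atTop with hL₁def
    set L₂ : ℝ := limsup (fun x => T₂ (v * x) / T₂ x) atTop with hL₂def
    have hL₁ : L₁ < 1 := hF₁PD v hv
    have hL₂ : L₂ < 1 := hF₂PD v hv
    set s₁ : ℝ := max ((L₁ + 1) / 2) (1 / 2) with hs₁def
    set s₂ : ℝ := max ((L₂ + 1) / 2) (1 / 2) with hs₂def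
    have hs₁gt : L₁ < s₁ := lt_of_lt_of_le (by linarith) (le_max_left _ _)
    have hs₂gt : L₂ < s₂ := lt_of_lt_of_le (by linarith) (le_max_left _ _)
    have hs₁1 : s₁ < 1 := max_lt (by linarith) (by norm_num)
    have hs₂1 : s₂ < 1 := max_lt (by linarith) (by norm_num)
    have hs₁0 : 0 < s₁ := lt_of_lt_of_le (by norm_num) (le_max_right _ _)
    have hs₂0 : 0 < s₂ := lt_of_lt_of_le (by norm_num) (le_max_right _ _)
    have h₁ : ∀ᶠ x in atTop, T₁ (v * x) / T₁ x < s₁ :=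
      eventually_lt_of_limsup_lt hs₁gt ⟨1, eventually_map.mpr hb₁⟩
    have h₂ : ∀ᶠ x in atTop, T₂ (v * x) / T₂ x < s₂ :=
      eventually_lt_of_limsup_lt hs₂gt ⟨1, eventually_map.mpr hb₂⟩
    set A : ℝ := s₁ * s₂ with hAdef
    have hA0 : 0 < A := mul_pos hs₁0 hs₂0
    have hA1 : A < 1 := by nlinarith
    have heB : (1:ℝ) < (1 + A) / (2 * A) := by
      rw [lt_div_iff₀ (by positivity)]
      linarith
    have he2 : ∀ᶠ x in atTop, g (v * x) / g x ≤ (1 + A) / (2 * A) :=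
      he.eventually (eventually_le_nhds heB)
    have hev : ∀ᶠ x in atTop, T (v * x) / T x ≤ (1 + A) / 2 := by
      filter_upwards [hfac, h₁, h₂, he2] with x hfx hr1 hr2 hex
      rw [hfx]
      have hn1 : (0:ℝ) ≤ T₁ (v * x) / T₁ x := div_nonneg (hnn X₁ _) (hnn X₁ _)
      have hn2 : (0:ℝ) ≤ T₂ (v * x) / T₂ x := div_nonneg (hnn X₂ _) (hnn X₂ _)
      have hn0 : (0:ℝ) ≤ g (v * x) / g x := div_nonneg (hgnn _) (hgnn _)
      have step1 : g (v * x) / g x * (T₁ (v * x) / T₁ x) ≤ (1 + A) / (2 * A) * s₁ :=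
        mul_le_mul hex hr1.le hn1 (by positivity)
      have step2 : g (v * x) / g x * (T₁ (v * x) / T₁ x) * (T₂ (v * x) / T₂ x)
          ≤ (1 + A) / (2 * A) * s₁ * s₂ :=
        mul_le_mul step1 hr2.le hn2 (by positivity)
      have heq : (1 + A) / (2 * A) * s₁ * s₂ = (1 + A) / 2 := by
        rw [hAdef]
        field_simp
      linarith [step2, heq.ge]
    have hcob : IsCoboundedUnder (· ≤ ·) atTop (fun x => T (v * x) / T x) := by
      refine IsBoundedUnder.isCoboundedUnder_le ⟨0, ?_⟩
      rw [eventually_map]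
      exact Eventually.of_forall fun x => div_nonneg (hnn _ _) (hnn _ _)
    calc limsup (fun x => T (v * x) / T x) atTop ≤ (1 + A) / 2 := limsup_le_of_le hcob hev
      _ < 1 := by linarith
end
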